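/- Let s ≥ 1 and let V be a finite set with |V| = 2s. Fix a perfect matching M₀ of V. Then for every integer k with 0 ≤ k ≤ s, the number of perfect matchings M of V sharing at least k pairs with M₀ satisfies k! · #{M : |M ∩ M₀| ≥ k} ≤ (2s)!/(2^s · s!). Equivalently, if M is drawn uniformly at random among all perfect matchings of V, then P[|M ∩ M₀| ≥ k] ≤ 1/k!. -/

import Mathlib

/-!
Encode a matching of a finset `A` as an involution with support `A`. If such an `f` pairs `x`
with `y`, then `swap x y * f` is a matching of `A \ {x, y}`, and this correspondence is
bijective; sorting the matchings of `A` by the partner of one point gives `(2s - 1)‼` of them.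

Let `a_k(A) = #(matchingsSharing A f₀ k)` count the matchings sharing at least `k` pairs with
`f₀`, i.e. agreeing with `f₀` on at least `2k` points. Double counting the pairs `(f, z)` with
`f z = f₀ z` gives `2k · a_k(A) ≤ ∑_{z ∈ A} a_{k-1}(A \ {z, f₀ z})`, that is
`k · a_k ≤ s · a_{k-1}` in size `2s`.
By induction on `k`, `k! · a_k ≤ s · (2s - 3)‼ ≤ (2s - 1)‼`.
-/

/-- A perfect matching of a finite set `V`, encoded as a fixed-point-free involution:
the pairs of the matching are the orbits `{x, f x}`. -/
def IsPerfectMatching {V : Type*} (f : Equiv.Perm V) : Prop :=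
  (∀ x, f (f x) = x) ∧ ∀ x, f x ≠ x

instance {V : Type*} [Fintype V] [DecidableEq V] (f : Equiv.Perm V) :
    Decidable (IsPerfectMatching f) := by
  unfold IsPerfectMatching; infer_instance

open Finset Equiv Nat

lemma Finset.card_sdiff_pair_add_two {α : Type*} [DecidableEq α] {A : Finset α} {x y : α}
    (hx : x ∈ A) (hy : y ∈ A) (hxy : x ≠ y) : #(A \ {x, y}) + 2 = #A := by
  rw [← card_pair hxy, card_sdiff_add_card_eq_card (insert_subset hx (singleton_subset_iff.2 hy))]

lemma Nat.mul_doubleFactorial_pred_le (s : ℕ) : s * (2 * (s - 1) - 1)‼ ≤ (2 * s - 1)‼ := by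
  cases s with
  | zero => simp
  | succ s =>
    rw [show 2 * (s + 1) - 1 = 2 * s + 1 by omega, doubleFactorial_add_one, add_tsub_cancel_right]
    exact Nat.mul_le_mul_right _ (by omega)

lemma Nat.factorial_two_mul_eq (s : ℕ) : (2 * s)! = 2 ^ s * s ! * (2 * s - 1)‼ := by
  cases s with
  | zero => rfl
  | succ s =>
    rw [← doubleFactorial_two_mul, show 2 * (s + 1) = 2 * s + 1 + 1 by omega,
      factorial_eq_mul_doubleFactorial, add_tsub_cancel_right]

namespace Equiv.Perm

variable {V : Type*} [DecidableEq V]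

lemma card_filter_swap_mul_apply_eq_apply {A : Finset V} {f g : Perm V} {x y : V}
    (hx : x ∈ A) (hy : y ∈ A) (hxy : x ≠ y)
    (hfx : f x = y) (hfy : f y = x) (hgx : g x = y) (hgy : g y = x) :
    #{z ∈ A \ {x, y} | (swap x y * f) z = (swap x y * g) z} + 2 = #{z ∈ A | f z = g z} := by
  have hagree : {z ∈ A \ {x, y} | (swap x y * f) z = (swap x y * g) z} =
      {z ∈ A | f z = g z} \ {x, y} := by
    ext z
    simp only [mem_filter, mem_sdiff, Perm.mul_apply, (swap x y).injective.eq_iff]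
    tauto
  rw [hagree, card_sdiff_pair_add_two (by simp [hx, hfx, hgx]) (by simp [hy, hfy, hgy]) hxy]

variable [Fintype V]

def IsMatchingOn (A : Finset V) (f : Perm V) : Prop :=
  Function.Involutive f ∧ f.support = A

instance (A : Finset V) (f : Perm V) : Decidable (IsMatchingOn A f) := by
  unfold IsMatchingOn Function.Involutive; infer_instance

lemma isMatchingOn_iff {A : Finset V} {f : Perm V} :
    IsMatchingOn A f ↔ (∀ z, f (f z) = z) ∧ ∀ z, f z ≠ z ↔ z ∈ A := by
  simp [IsMatchingOn, Function.Involutive, Finset.ext_iff, Perm.mem_support]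

lemma isMatchingOn_univ_iff {f : Perm V} : IsMatchingOn univ f ↔ IsPerfectMatching f := by
  simp [isMatchingOn_iff, IsPerfectMatching]

lemma isMatchingOn_empty_iff {f : Perm V} : IsMatchingOn ∅ f ↔ f = 1 := by
  simp only [IsMatchingOn, support_eq_empty_iff, and_iff_right_iff_imp]
  rintro rfl
  exact fun _ => rfl

lemma IsMatchingOn.apply_mem {A : Finset V} {f : Perm V} (hf : IsMatchingOn A f) {x : V}
    (hx : x ∈ A) : f x ∈ A := by
  rw [← hf.2] at hx ⊢
  exact apply_mem_support.2 hx

lemma IsMatchingOn.apply_ne {A : Finset V} {f : Perm V} (hf : IsMatchingOn A f) {x : V}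
    (hx : x ∈ A) : f x ≠ x := by
  rwa [← mem_support, hf.2]

theorem isMatchingOn_swap_mul_iff {A : Finset V} {f : Perm V} {x y : V}
    (hx : x ∈ A) (hy : y ∈ A) (hxy : x ≠ y) :
    IsMatchingOn (A \ {x, y}) (swap x y * f) ↔ IsMatchingOn A f ∧ f x = y := by
  simp only [isMatchingOn_iff, Perm.mul_apply, swap_apply_def, mem_sdiff, mem_insert,
    mem_singleton]
  grind

theorem card_filter_isMatchingOn_apply_eq {A : Finset V} {x y : V}
    (hx : x ∈ A) (hy : y ∈ A) (hxy : x ≠ y) (Q : Perm V → Prop) [DecidablePred Q] :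
    #{f | IsMatchingOn A f ∧ f x = y ∧ Q (swap x y * f)} =
      #{g | IsMatchingOn (A \ {x, y}) g ∧ Q g} := by
  have hswap (f : Perm V) := isMatchingOn_swap_mul_iff (f := f) hx hy hxy
  refine card_nbij' (swap x y * ·) (swap x y * ·) ?_ ?_ (fun f _ => swap_mul_self_mul x y f)
    (fun g _ => swap_mul_self_mul x y g) <;> intro f hf <;>
    simp only [coe_filter, mem_univ, true_and, Set.mem_ofPred_eq] at hf ⊢
  · exact ⟨(hswap f).2 ⟨hf.1, hf.2.1⟩, hf.2.2⟩
  · rw [← and_assoc, ← hswap, swap_mul_self_mul]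
    exact hf

theorem card_filter_isMatchingOn {A : Finset V} {s : ℕ} (hA : #A = 2 * s) :
    #{f : Perm V | IsMatchingOn A f} = (2 * s - 1)‼ := by
  induction s generalizing A with
  | zero =>
    rw [card_eq_zero.1 (by simpa using hA : #A = 0)]
    simp [isMatchingOn_empty_iff, filter_eq']
  | succ s ih =>
    obtain ⟨x, hx⟩ : A.Nonempty := card_pos.1 (by omega)
    have hfiber : ∀ y ∈ A.erase x,
        #{f : Perm V | IsMatchingOn A f ∧ f x = y} = (2 * s - 1)‼ := by
      intro y hy
      obtain ⟨hyx, hy⟩ := mem_erase.1 hy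
      have hcount := card_filter_isMatchingOn_apply_eq hx hy hyx.symm (fun _ => True)
      simp only [and_true] at hcount
      rw [hcount, ih]
      have := card_sdiff_pair_add_two hx hy hyx.symm
      omega
    rw [card_eq_sum_card_fiberwise (f := fun f : Perm V => f x) (t := A.erase x) fun f hf =>
      mem_erase.2 ⟨(mem_filter.1 hf).2.apply_ne hx, (mem_filter.1 hf).2.apply_mem hx⟩]
    simp only [filter_filter]
    rw [sum_congr rfl hfiber, sum_const, card_erase_of_mem hx, hA, smul_eq_mul,
      show 2 * (s + 1) - 1 = 2 * s + 1 by omega, doubleFactorial_add_one]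

def matchingsSharing (A : Finset V) (f₀ : Perm V) (k : ℕ) : Finset (Perm V) :=
  {f | IsMatchingOn A f ∧ 2 * k ≤ #{z ∈ A | f z = f₀ z}}

lemma mem_matchingsSharing {A : Finset V} {f₀ f : Perm V} {k : ℕ} :
    f ∈ matchingsSharing A f₀ k ↔ IsMatchingOn A f ∧ 2 * k ≤ #{z ∈ A | f z = f₀ z} := by
  simp [matchingsSharing]

lemma two_mul_mul_card_matchingsSharing_le (A : Finset V) (f₀ : Perm V) (k : ℕ) :
    2 * k * #(matchingsSharing A f₀ k) ≤
      ∑ z ∈ A, #{f ∈ matchingsSharing A f₀ k | f z = f₀ z} :=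
  calc 2 * k * #(matchingsSharing A f₀ k) = #(matchingsSharing A f₀ k) • (2 * k) := by
        rw [smul_eq_mul, mul_comm]
    _ ≤ ∑ f ∈ matchingsSharing A f₀ k, #{z ∈ A | f z = f₀ z} :=
      card_nsmul_le_sum _ _ _ fun _ hf => (mem_matchingsSharing.1 hf).2
    _ = ∑ z ∈ A, #{f ∈ matchingsSharing A f₀ k | f z = f₀ z} :=
      sum_card_bipartiteAbove_eq_sum_card_bipartiteBelow (fun (f : Perm V) z => f z = f₀ z)

theorem card_filter_matchingsSharing_succ_apply_eq {A : Finset V} {f₀ : Perm V}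
    (hf₀ : IsMatchingOn A f₀) {z : V} (hz : z ∈ A) (k : ℕ) :
    #{f ∈ matchingsSharing A f₀ (k + 1) | f z = f₀ z} =
      #(matchingsSharing (A \ {z, f₀ z}) (swap z (f₀ z) * f₀) k) := by
  have hy := hf₀.apply_mem hz
  have hzy := (hf₀.apply_ne hz).symm
  unfold matchingsSharing
  rw [← card_filter_isMatchingOn_apply_eq hz hy hzy]
  congr 1
  ext f
  simp only [filter_filter, mem_filter, mem_univ, true_and]
  have hagree (hf : IsMatchingOn A f) (hfz : f z = f₀ z) :=
    card_filter_swap_mul_apply_eq_apply hz hy hzy hfz (by rw [← hfz, hf.1]) rfl (hf₀.1 z)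
  constructor
  · rintro ⟨⟨hf, hk⟩, hfz⟩
    exact ⟨hf, hfz, by have := hagree hf hfz; omega⟩
  · rintro ⟨hf, hfz, hk⟩
    exact ⟨⟨hf, by have := hagree hf hfz; omega⟩, hfz⟩

theorem factorial_mul_card_matchingsSharing_le {A : Finset V} {s : ℕ} (hA : #A = 2 * s)
    {f₀ : Perm V} (hf₀ : IsMatchingOn A f₀) (k : ℕ) :
    k ! * #(matchingsSharing A f₀ k) ≤ (2 * s - 1)‼ := by
  induction k generalizing s A f₀ with
  | zero => simpa [matchingsSharing] using (card_filter_isMatchingOn hA).le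
  | succ k ih =>
    have hfiber (z : V) (hz : z ∈ A) :
        k ! * #{f ∈ matchingsSharing A f₀ (k + 1) | f z = f₀ z} ≤ (2 * (s - 1) - 1)‼ := by
      have hy := hf₀.apply_mem hz
      have hzy := (hf₀.apply_ne hz).symm
      rw [card_filter_matchingsSharing_succ_apply_eq hf₀ hz]
      refine ih ?_ ((isMatchingOn_swap_mul_iff hz hy hzy).2 ⟨hf₀, rfl⟩)
      have := card_sdiff_pair_add_two hz hy hzy
      omega
    refine Nat.le_of_mul_le_mul_left ?_ two_pos
    calc 2 * ((k + 1)! * #(matchingsSharing A f₀ (k + 1)))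
        = k ! * (2 * (k + 1) * #(matchingsSharing A f₀ (k + 1))) := by
          rw [factorial_succ]; ring
      _ ≤ k ! * ∑ z ∈ A, #{f ∈ matchingsSharing A f₀ (k + 1) | f z = f₀ z} := by
          gcongr; exact two_mul_mul_card_matchingsSharing_le A f₀ (k + 1)
      _ = ∑ z ∈ A, k ! * #{f ∈ matchingsSharing A f₀ (k + 1) | f z = f₀ z} := mul_sum _ _ _
      _ ≤ ∑ z ∈ A, (2 * (s - 1) - 1)‼ := sum_le_sum hfiber
      _ = 2 * (s * (2 * (s - 1) - 1)‼) := by rw [sum_const, hA, smul_eq_mul, mul_assoc]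
      _ ≤ 2 * (2 * s - 1)‼ := by gcongr; exact mul_doubleFactorial_pred_le s

end Equiv.Perm

theorem stmt18_general (s : ℕ) (V : Type*) [Fintype V] [DecidableEq V]
    (hV : Fintype.card V = 2 * s)
    (f₀ : Equiv.Perm V) (hf₀ : IsPerfectMatching f₀)
    (k : ℕ) :
    (Nat.factorial k : ℝ) *
        ((Finset.univ.filter (fun f : Equiv.Perm V =>
            IsPerfectMatching f ∧
              2 * k ≤ (Finset.univ.filter (fun x : V => f x = f₀ x)).card)).card : ℝ)
      ≤ (Nat.factorial (2 * s) : ℝ) / (2 ^ s * Nat.factorial s) := by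
  have hcount := Perm.factorial_mul_card_matchingsSharing_le (A := univ)
    (by rwa [Finset.card_univ]) (Perm.isMatchingOn_univ_iff.2 hf₀) k
  simp only [Perm.matchingsSharing, Perm.isMatchingOn_univ_iff] at hcount
  rw [le_div_iff₀ (by positivity), factorial_two_mul_eq]
  push_cast
  rw [mul_comm (2 ^ s * (s ! : ℝ))]
  exact mul_le_mul_of_nonneg_right (by exact_mod_cast hcount) (by positivity)

theorem stmt18 (s : ℕ) (hs : 1 ≤ s) (V : Type*) [Fintype V] [DecidableEq V]
    (hV : Fintype.card V = 2 * s)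
    (f₀ : Equiv.Perm V) (hf₀ : IsPerfectMatching f₀)
    (k : ℕ) (hk : k ≤ s) :
    (Nat.factorial k : ℝ) *
        ((Finset.univ.filter (fun f : Equiv.Perm V =>
            IsPerfectMatching f ∧
              2 * k ≤ (Finset.univ.filter (fun x : V => f x = f₀ x)).card)).card : ℝ)
      ≤ (Nat.factorial (2 * s) : ℝ) / (2 ^ s * Nat.factorial s) :=
  stmt18_general s V hV f₀ hf₀ k
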